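/- For K even, define f_K(q) := Σ_{τ∈S₂^K} sgn(τ)·q(τ₁(1),…,τ_K(1)) for q a distribution on {0,1}^K, where sgn(τ) is the product of the signs of the K permutations. If q = (B₁⊗…⊗B_K)p^{(K)} for BSCs B₁,…,B_K with parameters b_i = b_i(0|0) and any distribution p on {0,1}, then f_K(q) = ∏_{i=1}^K (2b_i − 1); in particular f_K(q) does not depend on p. -/
import Mathlib


/-- For even `K`, the alternating sum `f_K(q) = ∑_{τ ∈ S₂^K} sgn(τ) q(τ₁(1),…,τ_K(1))` of the
output distribution `q = (B₁ ⊗ … ⊗ B_K) p^{(K)}` of BSCs `B_i` (parameter `b i = b_i(0|0)`)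
with arbitrary input distribution `p` equals `∏ (2 b_i − 1)`; in particular it does not
depend on `p`. The sign pattern `z : Fin K → Fin 2` records `τ_i(1)`, and
`sgn(τ) = ∏_i (+1 if τ_i = id, i.e. z i = 1, and −1 otherwise)`. -/
theorem fK_independent_of_p {K : ℕ} (hK : Even K)
    (b : Fin K → ℝ) (hb : ∀ i, 0 ≤ b i ∧ b i ≤ 1)
    (p : Fin 2 → ℝ) (hp : ∀ x, 0 ≤ p x) (hp1 : p 0 + p 1 = 1) :
    ∑ z : Fin K → Fin 2,
        (∏ i, (if z i = 1 then (1 : ℝ) else -1)) *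
          (∑ x : Fin 2, p x * ∏ i, (if z i = x then b i else 1 - b i)) =
      ∏ i, (2 * b i - 1) := by
  have step : ∀ x : Fin 2,
      ∑ z : Fin K → Fin 2,
        ∏ i, ((if z i = 1 then (1 : ℝ) else -1) * (if z i = x then b i else 1 - b i)) =
      ∏ i, ∑ a : Fin 2, ((if a = 1 then (1 : ℝ) else -1) * (if a = x then b i else 1 - b i)) := by
    intro x
    rw [Finset.prod_univ_sum, Fintype.piFinset_univ]
  calc
    ∑ z : Fin K → Fin 2,
        (∏ i, (if z i = 1 then (1 : ℝ) else -1)) *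
          (∑ x : Fin 2, p x * ∏ i, (if z i = x then b i else 1 - b i))
      = ∑ x : Fin 2, p x * ∑ z : Fin K → Fin 2,
          ∏ i, ((if z i = 1 then (1 : ℝ) else -1) * (if z i = x then b i else 1 - b i)) := by
        simp_rw [Finset.mul_sum]
        rw [Finset.sum_comm]
        congr 1; funext x
        congr 1; funext z
        rw [Finset.prod_mul_distrib]
        ring
    _ = ∑ x : Fin 2, p x * ∏ i, ∑ a : Fin 2,
          ((if a = 1 then (1 : ℝ) else -1) * (if a = x then b i else 1 - b i)) := by
        simp_rw [step]
    _ = p 0 * ∏ i, -(2 * b i - 1) + p 1 * ∏ i, (2 * b i - 1) := by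
        rw [Fin.sum_univ_two]
        congr 2 <;> (congr 1; funext i; rw [Fin.sum_univ_two]; simp; ring)
    _ = ∏ i, (2 * b i - 1) := by
        have : ∏ i, -(2 * b i - 1) = (-1 : ℝ) ^ K * ∏ i, (2 * b i - 1) := by
          rw [show ((-1:ℝ)^K) = ∏ _i : Fin K, (-1:ℝ) by simp, ← Finset.prod_mul_distrib]
          exact Finset.prod_congr rfl fun i _ => by ring
        rw [this, hK.neg_one_pow, one_mul, ← add_mul, hp1, one_mul]
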